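/- Let K ≥ 1, let Y = Z = {0,1}^K with the discrete σ-algebra, and let ℓ(y,z) = (1/K)·Σ_{i=1}^K 1{y^i ≠ z^i} be the normalized Hamming loss. Suppose there exist h_{-1}, h_{+1} ∈ H and x ∈ X with η := ℓ(h_{-1}(x), h_{+1}(x)) > 0. Then for every online learner A and every T ≥ 1, there exists a stream (x_1,y_1),…,(x_T,y_T) (with x_t = x for all t and each y_t ∈ {h_{-1}(x), h_{+1}(x)}) on which the expected regret of A is at least η·√(T/8). -/

import Mathlib

open MeasureTheory

/-- The expected regret of the online learner `A` on the stream `s` of length `T`. -/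
noncomputable def expectedRegret {X Y Z : Type*} [MeasurableSpace Z] (H : Set (X → Z))
    (ℓ : Y → Z → ℝ) (A : List (X × Y) → X → ProbabilityMeasure Z)
    {T : ℕ} (s : Fin T → X × Y) : ℝ :=
  (∑ t : Fin T, ∫ z, ℓ (s t).2 z ∂(A ((List.ofFn s).take t.1) (s t).1 : Measure Z)) -
    ⨅ h : H, ∑ t : Fin T, ℓ (s t).2 ((h : X → Z) (s t).1)

/-- The normalized Hamming loss on `{0,1}^K` (encoded as `Fin K → Bool`). -/
noncomputable def hammingLoss (K : ℕ) (y z : Fin K → Bool) : ℝ :=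
  (1 / (K : ℝ)) * ∑ i : Fin K, if y i = z i then 0 else 1

/-!
The adversary plays the single instance `x` and labels round `t` by `hm x` or `hp x` according
to a uniformly random sign pattern `ε : Fin T → Bool`. The learner's prediction at round `t`
depends only on `ε` before `t`, so pairing `ε` with its flip at `t` and using the triangle
inequality of the Hamming loss shows that it pays at least `η / 2` per round on average. The
better of `hm`, `hp` pays `η · min(c, T - c) = η (T - |2c - T|) / 2`, where `c` is the number of
rounds labelled `hm x`. So the average regret is at least `η / 2 · E|2c - T|`, and
`E|2c - T| ≥ √(T / 2)` follows from the random-walk recursion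
`E|S_{T+1}| = E|S_T| + P(S_T = 0)` together with `C(2m, m) ≥ 4^m (√(m + 1) - √m)`.
-/

open Finset

lemma hammingLoss_eq_hammingDist_div (K : ℕ) (y z : Fin K → Bool) :
    hammingLoss K y z = hammingDist y z / K := by
  simp [hammingLoss, hammingDist, sum_ite, div_eq_inv_mul]

lemma hammingLoss_nonneg (K : ℕ) (y z : Fin K → Bool) : 0 ≤ hammingLoss K y z := by
  rw [hammingLoss_eq_hammingDist_div]
  positivity

lemma hammingLoss_self (K : ℕ) (y : Fin K → Bool) : hammingLoss K y y = 0 := by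
  simp [hammingLoss_eq_hammingDist_div]

lemma hammingLoss_comm (K : ℕ) (y z : Fin K → Bool) :
    hammingLoss K y z = hammingLoss K z y := by
  simp only [hammingLoss_eq_hammingDist_div, hammingDist_comm]

lemma hammingLoss_le_add (K : ℕ) (y z w : Fin K → Bool) :
    hammingLoss K y z ≤ hammingLoss K y w + hammingLoss K z w := by
  simp only [hammingLoss_eq_hammingDist_div, ← add_div]
  gcongr
  exact_mod_cast hammingDist_triangle_right y z w

def trueCount {T : ℕ} (ε : Fin T → Bool) : ℕ := #{t | ε t}

lemma trueCount_cons {T : ℕ} (b : Bool) (ε : Fin T → Bool) :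
    trueCount (Fin.cons b ε : Fin (T + 1) → Bool) = b.toNat + trueCount ε := by
  simp only [trueCount, card_filter, Fin.sum_univ_succ, Fin.cons_zero, Fin.cons_succ]
  cases b <;> rfl

lemma card_trueCount_eq (T k : ℕ) : #{ε : Fin T → Bool | trueCount ε = k} = T.choose k := by
  rw [← card_fin T, ← card_powersetCard, card_fin]
  refine card_nbij' (fun ε => ({t | ε t} : Finset (Fin T))) (fun S t => decide (t ∈ S))
    ?_ ?_ ?_ ?_
  · intro ε hε
    simpa [mem_powersetCard, trueCount] using (mem_filter.mp hε).2
  · intro S hS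
    rw [mem_coe, mem_powersetCard] at hS
    rw [mem_coe, mem_filter]
    simpa [trueCount] using hS.2
  · intro ε _
    funext t
    simp
  · intro S _
    ext t
    simp

lemma two_mul_abs_add_ite_le (u : ℝ) :
    2 * |u| + (if u = 0 then 2 else 0) ≤ |u + 1| + |u - 1| := by
  split_ifs with hu
  · norm_num [hu]
  · calc 2 * |u| + 0 = |(u + 1) + (u - 1)| := by rw [add_zero, ← abs_two, ← abs_mul]; ring_nf
      _ ≤ |u + 1| + |u - 1| := abs_add_le _ _

noncomputable def imbalanceSum (T : ℕ) : ℝ :=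
  ∑ ε : Fin T → Bool, |2 * (trueCount ε : ℝ) - T|

lemma imbalanceSum_succ_ge (T : ℕ) :
    2 * imbalanceSum T + 2 * #{ε : Fin T → Bool | 2 * trueCount ε = T} ≤
      imbalanceSum (T + 1) := by
  have hsucc : imbalanceSum (T + 1) = ∑ ε : Fin T → Bool,
      (|(2 * (trueCount ε : ℝ) - T) + 1| + |(2 * (trueCount ε : ℝ) - T) - 1|) := by
    rw [imbalanceSum, ← (Fin.consEquiv fun _ => Bool).sum_comp, Fintype.sum_prod_type,
      Fintype.sum_bool, ← sum_add_distrib]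
    refine sum_congr rfl fun ε _ => ?_
    simp only [Fin.consEquiv, Equiv.coe_fn_mk, trueCount_cons, Bool.toNat_true, Bool.toNat_false]
    push_cast
    ring_nf
  have hzero (ε : Fin T → Bool) : 2 * (trueCount ε : ℝ) - T = 0 ↔ 2 * trueCount ε = T := by
    rw [sub_eq_zero]
    exact_mod_cast Iff.rfl
  rw [hsucc, natCast_card_filter, mul_sum, imbalanceSum, mul_sum, ← sum_add_distrib]
  refine sum_le_sum fun ε _ => ?_
  have := two_mul_abs_add_ite_le (2 * (trueCount ε : ℝ) - T)
  simp only [hzero] at this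
  split_ifs at this ⊢ <;> linarith

lemma two_mul_imbalanceSum_le (T : ℕ) : 2 * imbalanceSum T ≤ imbalanceSum (T + 1) := by
  have := imbalanceSum_succ_ge T
  have : (0 : ℝ) ≤ 2 * #{ε : Fin T → Bool | 2 * trueCount ε = T} := by positivity
  linarith

lemma imbalanceSum_two_mul_succ_ge (m : ℕ) :
    2 * imbalanceSum (2 * m) + 2 * m.centralBinom ≤ imbalanceSum (2 * m + 1) := by
  have hcount : #{ε : Fin (2 * m) → Bool | 2 * trueCount ε = 2 * m} = m.centralBinom := by
    simp only [Nat.mul_left_cancel_iff two_pos, card_trueCount_eq, Nat.centralBinom]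
  have := imbalanceSum_succ_ge (2 * m)
  rwa [hcount] at this

lemma sixteen_pow_le_centralBinom_sq_mul (m : ℕ) :
    16 ^ m ≤ m.centralBinom ^ 2 * (4 * m + 1) := by
  induction m with
  | zero => simp
  | succ m ih =>
    have hrec := Nat.succ_mul_centralBinom_succ m
    refine Nat.le_of_mul_le_mul_left (c := (m + 1) ^ 2) ?_ (by positivity)
    calc (m + 1) ^ 2 * 16 ^ (m + 1) = 4 * (2 * m + 2) ^ 2 * 16 ^ m := by ring
      _ ≤ 4 * (2 * m + 2) ^ 2 * (m.centralBinom ^ 2 * (4 * m + 1)) := by gcongr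
      _ = (2 * m + 2) ^ 2 * (4 * m + 1) * (4 * m.centralBinom ^ 2) := by ring
      _ ≤ (2 * m + 1) ^ 2 * (4 * (m + 1) + 1) * (4 * m.centralBinom ^ 2) := by
        exact Nat.mul_le_mul_right _ (by nlinarith)
      _ = ((m + 1) * (m + 1).centralBinom) ^ 2 * (4 * (m + 1) + 1) := by rw [hrec]; ring
      _ = (m + 1) ^ 2 * ((m + 1).centralBinom ^ 2 * (4 * (m + 1) + 1)) := by ring

lemma four_pow_mul_sqrt_sub_le_centralBinom (m : ℕ) :
    4 ^ m * (√(m + 1) - √m) ≤ m.centralBinom := by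
  have ha : √(m + 1) ^ 2 = m + 1 := Real.sq_sqrt (by positivity)
  have hb : √m ^ 2 = m := Real.sq_sqrt (by positivity)
  have hba : √m ≤ √(m + 1) := Real.sqrt_le_sqrt (by linarith)
  have hsub : √(m + 1) - √m = 1 / (√(m + 1) + √m) := by
    rw [eq_div_iff (by positivity)]
    linear_combination ha - hb
  have hsqrt : √(4 * m + 1) ≤ √(m + 1) + √m := by
    rw [Real.sqrt_le_iff]
    exact ⟨by positivity, by nlinarith [mul_le_mul_of_nonneg_right hba (Real.sqrt_nonneg m)]⟩
  have hpow : (4 : ℝ) ^ m ≤ m.centralBinom * √(4 * m + 1) := by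
    rw [← Real.sqrt_sq (Nat.cast_nonneg m.centralBinom), ← Real.sqrt_mul (by positivity)]
    apply Real.le_sqrt_of_sq_le
    rw [← pow_mul, mul_comm m 2, pow_mul]
    exact_mod_cast sixteen_pow_le_centralBinom_sq_mul m
  rw [hsub, mul_one_div, div_le_iff₀ (by positivity)]
  calc (4 : ℝ) ^ m ≤ m.centralBinom * √(4 * m + 1) := hpow
    _ ≤ m.centralBinom * (√(m + 1) + √m) := by gcongr

lemma four_pow_mul_sqrt_le_imbalanceSum (m : ℕ) : 4 ^ m * √m ≤ imbalanceSum (2 * m) := by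
  induction m with
  | zero => simp [imbalanceSum]
  | succ m ih =>
    have hodd := imbalanceSum_two_mul_succ_ge m
    have heven := two_mul_imbalanceSum_le (2 * m + 1)
    have hcb := four_pow_mul_sqrt_sub_le_centralBinom m
    rw [show 2 * (m + 1) = 2 * m + 1 + 1 by ring]
    calc (4 : ℝ) ^ (m + 1) * √(m + 1 : ℕ)
        = 4 * (4 ^ m * √m) + 4 * (4 ^ m * (√(m + 1) - √m)) := by push_cast; ring
      _ ≤ 4 * imbalanceSum (2 * m) + 4 * m.centralBinom := by gcongr
      _ ≤ imbalanceSum (2 * m + 1 + 1) := by linarith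

lemma two_pow_mul_sqrt_le_imbalanceSum (T : ℕ) : 2 ^ T * √(T / 2) ≤ imbalanceSum T := by
  obtain ⟨m, rfl | rfl⟩ := Nat.even_or_odd' T
  · rw [pow_mul, show (2 : ℝ) ^ 2 = 4 by norm_num,
      show ((2 * m : ℕ) : ℝ) / 2 = m by push_cast; ring]
    exact four_pow_mul_sqrt_le_imbalanceSum m
  · have hodd := imbalanceSum_two_mul_succ_ge m
    have heven := four_pow_mul_sqrt_le_imbalanceSum m
    have hcb := four_pow_mul_sqrt_sub_le_centralBinom m
    have hsqrt : √((2 * m + 1 : ℕ) / 2 : ℝ) ≤ √(m + 1) :=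
      Real.sqrt_le_sqrt (by push_cast; linarith)
    calc (2 : ℝ) ^ (2 * m + 1) * √((2 * m + 1 : ℕ) / 2 : ℝ)
        ≤ 2 * 4 ^ m * √(m + 1) := by
          rw [pow_succ, pow_mul, show (2 : ℝ) ^ 2 = 4 by norm_num, mul_comm _ (2 : ℝ)]
          gcongr
      _ = 2 * (4 ^ m * √m) + 2 * (4 ^ m * (√(m + 1) - √m)) := by ring
      _ ≤ imbalanceSum (2 * m + 1) := by linarith

lemma card_mul_le_two_mul_sum_of_involutive {α : Type*} [Fintype α] {σ : α → α}
    (hσ : Function.Involutive σ) {f : α → ℝ} {c : ℝ} (h : ∀ a, c ≤ f a + f (σ a)) :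
    Fintype.card α * c ≤ 2 * ∑ a, f a := by
  have hσsum : ∑ a, f (σ a) = ∑ a, f a := hσ.bijective.sum_comp f
  calc Fintype.card α * c = ∑ _a : α, c := by simp
    _ ≤ ∑ a, (f a + f (σ a)) := sum_le_sum fun a _ => h a
    _ = 2 * ∑ a, f a := by rw [sum_add_distrib, hσsum]; ring

lemma take_ofFn_eq_of_forall_lt {α : Type*} {T : ℕ} (n : ℕ) {f g : Fin T → α}
    (h : ∀ u : Fin T, (u : ℕ) < n → f u = g u) :
    (List.ofFn f).take n = (List.ofFn g).take n := by
  refine List.ext_getElem (by simp) fun i hf _ => ?_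
  simp only [List.length_take, List.length_ofFn, lt_min_iff] at hf
  simpa using h ⟨i, hf.2⟩ hf.1

def twoPointStream {X Y : Type*} (x : X) (a b : Y) {T : ℕ} (ε : Fin T → Bool) :
    Fin T → X × Y :=
  fun t => (x, if ε t then a else b)

@[simp]
lemma twoPointStream_fst {X Y : Type*} (x : X) (a b : Y) {T : ℕ} (ε : Fin T → Bool)
    (t : Fin T) :
    (twoPointStream x a b ε t).1 = x :=
  rfl

lemma two_pow_mul_le_two_mul_sum_integral {X Y Z : Type*} [MeasurableSpace Z] [Finite Z]
    [MeasurableSingletonClass Z] (ℓ : Y → Z → ℝ)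
    (A : List (X × Y) → X → ProbabilityMeasure Z)
    (x : X) (a b : Y) {η : ℝ} (hη : ∀ z, η ≤ ℓ a z + ℓ b z) {T : ℕ} (t : Fin T) :
    2 ^ T * η ≤ 2 * ∑ ε : Fin T → Bool,
      ∫ z, ℓ (twoPointStream x a b ε t).2 z
        ∂(A ((List.ofFn (twoPointStream x a b ε)).take t) x : Measure Z) := by
  set toggle : (Fin T → Bool) → Fin T → Bool := fun ε => Function.update ε t (!ε t)
  have htoggle : Function.Involutive toggle := fun ε => by simp [toggle]
  have hhist (ε : Fin T → Bool) : (List.ofFn (twoPointStream x a b (toggle ε))).take t =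
      (List.ofFn (twoPointStream x a b ε)).take t :=
    take_ofFn_eq_of_forall_lt t fun u hu => by
      simp [twoPointStream, toggle, Function.update_of_ne (Fin.ne_of_lt hu)]
  convert card_mul_le_two_mul_sum_of_involutive htoggle (c := η) fun ε => ?_ using 2
  · simp
  rw [hhist, ← integral_add Integrable.of_finite Integrable.of_finite]
  calc η = ∫ _z, η ∂(A ((List.ofFn (twoPointStream x a b ε)).take t) x : Measure Z) := by
        simp
    _ ≤ _ := integral_mono (integrable_const _) Integrable.of_finite fun z => by
      cases h : ε t <;> simp [twoPointStream, toggle, h, hη z, add_comm (ℓ b z)]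

lemma sum_hammingLoss_twoPointStream_right {X : Type*} {K : ℕ} (x : X) (a b : Fin K → Bool)
    {T : ℕ} (ε : Fin T → Bool) :
    ∑ t, hammingLoss K (twoPointStream x a b ε t).2 b = hammingLoss K a b * trueCount ε := by
  simp [twoPointStream, trueCount, apply_ite (hammingLoss K · b), hammingLoss_self, sum_ite,
    mul_comm]

lemma sum_hammingLoss_twoPointStream_left {X : Type*} {K : ℕ} (x : X) (a b : Fin K → Bool)
    {T : ℕ} (ε : Fin T → Bool) :
    ∑ t, hammingLoss K (twoPointStream x a b ε t).2 a =
      hammingLoss K a b * (T - trueCount ε) := by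
  have hcard := card_filter_add_card_filter_not (s := univ) (p := fun t : Fin T => ε t = true)
  simp only [card_univ, Fintype.card_fin, Bool.not_eq_true] at hcard
  replace hcard : (#{t | ε t} : ℝ) + #{t | ε t = false} = T := by exact_mod_cast hcard
  simp only [twoPointStream, trueCount, apply_ite (hammingLoss K · a), hammingLoss_self,
    hammingLoss_comm K b a, sum_ite, sum_const_zero, sum_const, nsmul_eq_mul, zero_add,
    Bool.not_eq_true]
  linear_combination hammingLoss K a b * hcard

lemma iInf_sum_hammingLoss_twoPointStream_le {X : Type*} {K : ℕ} {H : Set (X → Fin K → Bool)}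
    {hm hp : X → Fin K → Bool} (hmH : hm ∈ H) (hpH : hp ∈ H) (x : X) {T : ℕ}
    (ε : Fin T → Bool) :
    ⨅ h : H, ∑ t, hammingLoss K (twoPointStream x (hm x) (hp x) ε t).2 ((h : X → _) x) ≤
      hammingLoss K (hm x) (hp x) * ((T - |2 * (trueCount ε : ℝ) - T|) / 2) := by
  have hbdd : BddBelow (Set.range fun h : H =>
      ∑ t, hammingLoss K (twoPointStream x (hm x) (hp x) ε t).2 ((h : X → _) x)) :=
    ⟨0, Set.forall_mem_range.2 fun _ => sum_nonneg fun _ _ => hammingLoss_nonneg _ _ _⟩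
  rcases le_total (2 * (trueCount ε : ℝ)) T with h | h
  · calc _ ≤ _ := ciInf_le hbdd ⟨hp, hpH⟩
      _ = hammingLoss K (hm x) (hp x) * trueCount ε := sum_hammingLoss_twoPointStream_right ..
      _ = _ := by rw [abs_of_nonpos (by linarith)]; ring
  · calc _ ≤ _ := ciInf_le hbdd ⟨hm, hmH⟩
      _ = hammingLoss K (hm x) (hp x) * (T - trueCount ε) :=
        sum_hammingLoss_twoPointStream_left ..
      _ = _ := by rw [abs_of_nonneg (by linarith)]; ring

lemma two_pow_mul_le_sum_expectedRegret {X : Type*} {K : ℕ} {H : Set (X → Fin K → Bool)}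
    {hm hp : X → Fin K → Bool} (hmH : hm ∈ H) (hpH : hp ∈ H) (x : X)
    (A : List (X × (Fin K → Bool)) → X → ProbabilityMeasure (Fin K → Bool)) (T : ℕ) :
    2 ^ T * (hammingLoss K (hm x) (hp x) * √(T / 8)) ≤
      ∑ ε : Fin T → Bool,
        expectedRegret H (hammingLoss K) A (twoPointStream x (hm x) (hp x) ε) := by
  have hlearner : T * (2 ^ T * hammingLoss K (hm x) (hp x)) ≤
      2 * ∑ ε : Fin T → Bool, ∑ t : Fin T,
      ∫ z, hammingLoss K (twoPointStream x (hm x) (hp x) ε t).2 z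
        ∂(A ((List.ofFn (twoPointStream x (hm x) (hp x) ε)).take t) x : Measure _) := by
    rw [sum_comm, mul_sum]
    calc (T : ℝ) * (2 ^ T * hammingLoss K (hm x) (hp x))
        = ∑ _t : Fin T, 2 ^ T * hammingLoss K (hm x) (hp x) := by simp
      _ ≤ _ := sum_le_sum fun t _ => two_pow_mul_le_two_mul_sum_integral (hammingLoss K) A x
        (hm x) (hp x) (hammingLoss_le_add K (hm x) (hp x)) t
  have hcomparator : ∑ ε : Fin T → Bool, ⨅ h : H, ∑ t,
      hammingLoss K (twoPointStream x (hm x) (hp x) ε t).2 ((h : X → Fin K → Bool) x) ≤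
        hammingLoss K (hm x) (hp x) * (2 ^ T * T - imbalanceSum T) / 2 := by
    refine (sum_le_sum fun ε _ =>
      iInf_sum_hammingLoss_twoPointStream_le hmH hpH x ε).trans_eq ?_
    simp [imbalanceSum, ← mul_sum, ← sum_div, sum_sub_distrib, mul_div_assoc]
  have himbalance := mul_le_mul_of_nonneg_left (two_pow_mul_sqrt_le_imbalanceSum T)
    (hammingLoss_nonneg K (hm x) (hp x))
  have hsqrt : √(T / 8 : ℝ) = √(T / 2) / 2 := by
    rw [show (T / 8 : ℝ) = T / 2 / 2 ^ 2 by ring, Real.sqrt_div' _ (by positivity),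
      Real.sqrt_sq two_pos.le]
  rw [hsqrt]
  simp only [expectedRegret, sum_sub_distrib, twoPointStream_fst]
  linarith

theorem statement12_general {X : Type*} (K : ℕ)
    (H : Set (X → (Fin K → Bool)))
    (hm hp : X → (Fin K → Bool)) (hmH : hm ∈ H) (hpH : hp ∈ H)
    (x : X) :
    ∀ A : List (X × (Fin K → Bool)) → X → ProbabilityMeasure (Fin K → Bool),
      ∀ T : ℕ, 1 ≤ T →
        ∃ s : Fin T → X × (Fin K → Bool),
          (∀ t, (s t).1 = x ∧ ((s t).2 = hm x ∨ (s t).2 = hp x)) ∧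
          hammingLoss K (hm x) (hp x) * Real.sqrt (T / 8) ≤
            expectedRegret H (hammingLoss K) A s := by
  intro A T _
  have haverage : ∑ _ε : Fin T → Bool, hammingLoss K (hm x) (hp x) * √(T / 8) ≤
      ∑ ε : Fin T → Bool,
        expectedRegret H (hammingLoss K) A (twoPointStream x (hm x) (hp x) ε) := by
    simpa using two_pow_mul_le_sum_expectedRegret hmH hpH x A T
  obtain ⟨ε, -, hε⟩ := exists_le_of_sum_le univ_nonempty haverage
  exact ⟨twoPointStream x (hm x) (hp x) ε, fun t => ⟨rfl, ite_eq_or_eq _ _ _⟩, hε⟩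

/-- multilabel classification lower bound. Let `Y = Z = {0,1}^K` with the
normalized Hamming loss. If two hypotheses `h₋₁, h₊₁ ∈ H` satisfy
`η = ℓ(h₋₁(x), h₊₁(x)) > 0` at some `x`, then every online learner suffers expected
regret at least `η·√(T/8)` on some stream of length `T` supported on `x` with labels
among `{h₋₁(x), h₊₁(x)}`. -/
theorem statement12 {X : Type*} [Nonempty X] (K : ℕ) (hK : 1 ≤ K)
    (H : Set (X → (Fin K → Bool))) (hH : H.Nonempty)
    (hm hp : X → (Fin K → Bool)) (hmH : hm ∈ H) (hpH : hp ∈ H)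
    (x : X) (hη : 0 < hammingLoss K (hm x) (hp x)) :
    ∀ A : List (X × (Fin K → Bool)) → X → ProbabilityMeasure (Fin K → Bool),
      ∀ T : ℕ, 1 ≤ T →
        ∃ s : Fin T → X × (Fin K → Bool),
          (∀ t, (s t).1 = x ∧ ((s t).2 = hm x ∨ (s t).2 = hp x)) ∧
          hammingLoss K (hm x) (hp x) * Real.sqrt (T / 8) ≤
            expectedRegret H (hammingLoss K) A s :=
  statement12_general K H hm hp hmH hpH x
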